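/- Let Q_q = [[b, b/a], [1, 0]] with a, b nonzero reals. For odd n, det(Q_q^n ∘ Q_q^(−n)) = 1 − 2 q_n², where ∘ is the Hadamard product and q_n is the n-th bi-periodic Fibonacci number. -/

import Mathlib

/-- Bi-periodic Fibonacci sequence: q 0 = 0, q 1 = 1,
    q n = a * q (n-1) + q (n-2) if n even, q n = b * q (n-1) + q (n-2) if n odd. -/
def bpFib (a b : ℝ) : ℕ → ℝ
  | 0 => 0
  | 1 => 1
  | n + 2 => (if Even (n + 2) then a else b) * bpFib a b (n + 1) + bpFib a b n

/-- Bi-periodic Lucas sequence: l 0 = 2, l 1 = a,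
    l n = b * l (n-1) + l (n-2) if n even, l n = a * l (n-1) + l (n-2) if n odd. -/
def bpLucas (a b : ℝ) : ℕ → ℝ
  | 0 => 2
  | 1 => a
  | n + 2 => (if Even (n + 2) then b else a) * bpLucas a b (n + 1) + bpLucas a b n

/-!
For an invertible 2 × 2 matrix `M`, `M ∘ M⁻¹ = (det M)⁻¹ • !![m₀₀ m₁₁, -m₀₁ m₁₀; -m₀₁ m₁₀, m₀₀ m₁₁]`,
and its determinant `(m₀₀ m₁₁ + m₀₁ m₁₀) / det M` equals `1 + 2 m₀₁ m₁₀ / det M`.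
For `Q = Q_q` and odd `n = 2m + 1`, `det Qⁿ = -(b/a)ⁿ`, and multiplying by `Q²` shows that the
off-diagonal entries of `Qⁿ` are `(b/a)^(m+1) q_n` and `(b/a)^m q_n`, whose product is `(b/a)ⁿ q_n²`.
-/

theorem Matrix.det_hadamard_inv_fin_two {K : Type*} [Field K] (M : Matrix (Fin 2) (Fin 2) K)
    (hM : M.det ≠ 0) : (Matrix.hadamard M M⁻¹).det = 1 + 2 * M 0 1 * M 1 0 / M.det := by
  rw [Matrix.det_fin_two] at hM ⊢
  rw [Matrix.inv_def, Matrix.adjugate_fin_two, Matrix.det_fin_two, Ring.inverse_eq_inv']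
  simp only [Matrix.hadamard_apply, Matrix.smul_apply, Matrix.of_apply, Matrix.cons_val',
    Matrix.cons_val_zero, Matrix.cons_val_one, Matrix.empty_val',
    Matrix.cons_val_fin_one, smul_eq_mul]
  field_simp
  ring

section BiPeriodic

variable (a b : ℝ)

theorem bpFib_two_mul_add_two (m : ℕ) :
    bpFib a b (2 * m + 2) = a * bpFib a b (2 * m + 1) + bpFib a b (2 * m) := by
  rw [bpFib, if_pos (by simp [parity_simps])]

theorem bpFib_two_mul_add_three (m : ℕ) :
    bpFib a b (2 * m + 3) = b * bpFib a b (2 * m + 2) + bpFib a b (2 * m + 1) := by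
  rw [bpFib, if_neg (by simp [parity_simps])]

noncomputable def bpFibMatrix : Matrix (Fin 2) (Fin 2) ℝ := !![b, b / a; 1, 0]

theorem det_bpFibMatrix_pow_odd {n : ℕ} (hn : Odd n) :
    (bpFibMatrix a b ^ n).det = -(b / a) ^ n := by
  rw [Matrix.det_pow, bpFibMatrix, Matrix.det_fin_two_of, mul_zero, mul_one, zero_sub,
    hn.neg_pow]

theorem bpFibMatrix_sq :
    bpFibMatrix a b ^ 2 = !![b ^ 2 + b / a, b ^ 2 / a; b, b / a] := by
  rw [sq, bpFibMatrix, Matrix.mul_fin_two]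
  ring_nf

theorem bpFibMatrix_pow_two_mul_add_one (ha : a ≠ 0) (m : ℕ) :
    bpFibMatrix a b ^ (2 * m + 1) =
      !![(b / a) ^ (m + 1) * bpFib a b (2 * m + 2), (b / a) ^ (m + 1) * bpFib a b (2 * m + 1);
         (b / a) ^ m * bpFib a b (2 * m + 1), (b / a) ^ (m + 1) * bpFib a b (2 * m)] := by
  induction m with
  | zero => simp [bpFibMatrix, bpFib, ha]
  | succ m ih =>
    have e4 : bpFib a b (2 * m + 4) = a * bpFib a b (2 * m + 3) + bpFib a b (2 * m + 2) :=
      bpFib_two_mul_add_two a b (m + 1)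
    have hsplit : bpFibMatrix a b ^ (2 * (m + 1) + 1) =
        bpFibMatrix a b ^ 2 * bpFibMatrix a b ^ (2 * m + 1) := by
      rw [← pow_add]; ring_nf
    rw [hsplit, bpFibMatrix_sq, ih, Matrix.mul_fin_two, show 2 * (m + 1) + 2 = 2 * m + 4 by ring,
      show 2 * (m + 1) + 1 = 2 * m + 3 by ring, show 2 * (m + 1) = 2 * m + 2 by ring, e4,
      bpFib_two_mul_add_three, bpFib_two_mul_add_two a b m]
    ext i j
    fin_cases i <;> fin_cases j <;> simp [div_pow] <;> field_simp <;> ring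

theorem bpFibMatrix_pow_odd_apply_zero_one_mul_apply_one_zero (ha : a ≠ 0) {n : ℕ}
    (hn : Odd n) : (bpFibMatrix a b ^ n) 0 1 * (bpFibMatrix a b ^ n) 1 0 =
      (b / a) ^ n * bpFib a b n ^ 2 := by
  obtain ⟨m, rfl⟩ := hn
  rw [bpFibMatrix_pow_two_mul_add_one a b ha]
  simp only [Matrix.of_apply, Matrix.cons_val', Matrix.cons_val_zero, Matrix.cons_val_one,
    Matrix.empty_val', Matrix.cons_val_fin_one]
  ring

end BiPeriodic

theorem hadamard_det_odd (a b : ℝ) (ha : a ≠ 0) (hb : b ≠ 0) (n : ℕ) (h : Odd n) :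
    (Matrix.hadamard ((!![b, b / a; 1, 0] : Matrix (Fin 2) (Fin 2) ℝ) ^ n)
        (((!![b, b / a; 1, 0] : Matrix (Fin 2) (Fin 2) ℝ) ^ n)⁻¹)).det =
      1 - 2 * (bpFib a b n) ^ 2 := by
  have hc : (b / a) ^ n ≠ 0 := pow_ne_zero _ (div_ne_zero hb ha)
  have hdet := det_bpFibMatrix_pow_odd a b h
  change (Matrix.hadamard (bpFibMatrix a b ^ n) (bpFibMatrix a b ^ n)⁻¹).det = _
  rw [Matrix.det_hadamard_inv_fin_two _ (by simpa [hdet] using hc), mul_assoc,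
    bpFibMatrix_pow_odd_apply_zero_one_mul_apply_one_zero a b ha h, hdet]
  field_simp
  ring
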